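/- A finite direct sum G = G_1 ⊕ ... ⊕ G_n of abelian groups is w-divisible if and only if there exists an index i with |G_i| = |G| and G_i w-divisible. -/

import Mathlib

/-- The subgroup `nG = {n • g : g ∈ G}` of an abelian group `G`. -/
def nsmulRange (n : ℕ) (G : Type) [AddCommGroup G] : AddSubgroup G :=
  (n • AddMonoidHom.id G).range

/-- An abelian group is `w`-divisible if `|nG| = |G|` for every positive integer `n`. -/
def WDivisible (G : Type) [AddCommGroup G] : Prop :=
  ∀ n : ℕ, 0 < n → Cardinal.mk ↥(nsmulRange n G) = Cardinal.mk G

/-- An abelian group is strongly unbounded if it contains an internal direct sum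
`⊕_{i ∈ I} A_i` of subgroups with `|I| = |G|` and each `A_i` unbounded
(of infinite exponent). -/
def StronglyUnbounded (G : Type) [AddCommGroup G] : Prop :=
  ∃ (I : Type) (A : I → AddSubgroup G), Cardinal.mk I = Cardinal.mk G ∧
    iSupIndep A ∧ ∀ i, ∀ n : ℕ, 0 < n → ∃ a ∈ A i, n • a ≠ 0
/-!
If some summand `Gᵢ` has `|Gᵢ| = |G|` and is `w`-divisible, then `|mG| ≥ |mGᵢ| = |G|` because
`mGᵢ` embeds in `mG`. Conversely, a finite `w`-divisible group is trivial, since `|G| • G = 0`.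
If `G` is infinite and no summand qualifies, every `Gᵢ` has some `mᵢ` with `|mᵢGᵢ| < |G|`; for
`m = ∏ mᵢ` the group `mG ≅ Π mGᵢ` is a finite product of sets smaller than the infinite cardinal
`|G|`, hence itself smaller than `|G|`.
-/

open Cardinal

section

variable {G : Type} [AddCommGroup G]

lemma mem_nsmulRange {m : ℕ} {x : G} : x ∈ nsmulRange m G ↔ ∃ y, m • y = x := by
  simp [nsmulRange]

lemma nsmulRange_le_of_dvd {m M : ℕ} (h : m ∣ M) : nsmulRange M G ≤ nsmulRange m G := by
  obtain ⟨k, rfl⟩ := h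
  rintro _ ⟨y, rfl⟩
  exact mem_nsmulRange.mpr ⟨k • y, by simp [mul_nsmul']⟩

lemma nsmulRange_natCard_eq_bot [Finite G] : nsmulRange (Nat.card G) G = ⊥ := by
  rw [eq_bot_iff]
  rintro _ ⟨y, rfl⟩
  exact card_nsmul_eq_zero'

lemma WDivisible.subsingleton_of_finite [Finite G] (hw : WDivisible G) : Subsingleton G := by
  have h := hw (Nat.card G) Nat.card_pos
  rw [nsmulRange_natCard_eq_bot, mk_eq_one] at h
  exact (eq_one_iff_unique.mp h.symm).1

lemma WDivisible.of_subsingleton [Subsingleton G] : WDivisible G := fun _ _ =>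
  mk_congr (equivOfSubsingletonOfSubsingleton Subtype.val fun _ => 0)

end

universe u

lemma Cardinal.mk_pi_lt_of_lt {ι : Type u} [Fintype ι] {α : ι → Type u} {c : Cardinal.{u}}
    (hc : ℵ₀ ≤ c) (h : ∀ i, #(α i) < c) : #(∀ i, α i) < c := by
  rw [mk_pi, prod_eq_of_fintype, lift_id]
  exact Finset.prod_induction _ (· < c) (fun _ _ => mul_lt_of_lt hc)
    (one_lt_aleph0.trans_le hc) fun i _ => h i

section

variable {ι : Type} {G : ι → Type} [∀ i, AddCommGroup (G i)]

lemma mem_nsmulRange_pi {m : ℕ} {f : ∀ i, G i} :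
    f ∈ nsmulRange m (∀ i, G i) ↔ ∀ i, f i ∈ nsmulRange m (G i) := by
  simp only [mem_nsmulRange]
  constructor
  · rintro ⟨y, rfl⟩ i
    exact ⟨y i, rfl⟩
  · intro h
    choose y hy using h
    exact ⟨y, funext hy⟩

lemma mk_nsmulRange_pi (m : ℕ) :
    #(nsmulRange m (∀ i, G i)) = #(∀ i, nsmulRange m (G i)) :=
  mk_congr <| (Equiv.subtypeEquivRight fun _ => mem_nsmulRange_pi).trans Equiv.subtypePiEquivPi

lemma mk_nsmulRange_le_pi (m : ℕ) (i : ι) :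
    #(nsmulRange m (G i)) ≤ #(nsmulRange m (∀ i, G i)) := by
  classical
  rw [mk_nsmulRange_pi]
  exact mk_le_of_injective (Pi.single_injective (M := fun j => nsmulRange m (G j)) i)

lemma WDivisible.pi_of_mk_eq {i : ι} (hcard : #(G i) = #(∀ j, G j)) (hw : WDivisible (G i)) :
    WDivisible (∀ j, G j) := fun m hm =>
  (mk_subtype_le _).antisymm <| by
    rw [← hcard, ← hw m hm]
    exact mk_nsmulRange_le_pi m i

end

lemma exists_mk_nsmulRange_lt {G : Type} [AddCommGroup G] {c : Cardinal} (hle : #G ≤ c)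
    (h : ¬(#G = c ∧ WDivisible G)) : ∃ m, 0 < m ∧ #(nsmulRange m G) < c := by
  rcases hle.lt_or_eq with hlt | rfl
  · exact ⟨1, one_pos, (mk_subtype_le _).trans_lt hlt⟩
  · obtain ⟨m, hm, hne⟩ : ∃ m, 0 < m ∧ #(nsmulRange m G) ≠ #G := by
      simpa [WDivisible] using h
    exact ⟨m, hm, (mk_subtype_le _).lt_of_ne hne⟩

lemma WDivisible.exists_component_of_aleph0_le {ι : Type} [Fintype ι] {G : ι → Type}
    [∀ i, AddCommGroup (G i)] (hinf : ℵ₀ ≤ #(∀ i, G i)) (hw : WDivisible (∀ i, G i)) :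
    ∃ i, #(G i) = #(∀ j, G j) ∧ WDivisible (G i) := by
  classical
  by_contra! h
  choose m hm hlt using fun i =>
    exists_mk_nsmulRange_lt (mk_le_of_injective (Pi.single_injective (M := G) i))
      (not_and.mpr (h i))
  have hM : 0 < ∏ i, m i := Finset.prod_pos fun i _ => hm i
  have hdvd (i : ι) : m i ∣ ∏ j, m j := Finset.dvd_prod_of_mem m (Finset.mem_univ i)
  have hsmall : #(∀ i, nsmulRange (∏ j, m j) (G i)) < #(∀ i, G i) :=
    mk_pi_lt_of_lt hinf fun i =>
      (mk_le_mk_of_subset (nsmulRange_le_of_dvd (hdvd i))).trans_lt (hlt i)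
  rw [← mk_nsmulRange_pi, hw _ hM] at hsmall
  exact hsmall.false

/-- A finite direct sum `G = G₁ ⊕ ⋯ ⊕ Gₙ` of abelian groups is `w`-divisible if and only if
there is an index `i` with `|Gᵢ| = |G|` and `Gᵢ` `w`-divisible. -/
theorem wDivisible_pi_iff (n : ℕ) (hn : 0 < n)
    (G : Fin n → Type) [∀ i, AddCommGroup (G i)] :
    WDivisible (∀ i, G i) ↔
      ∃ i, Cardinal.mk (G i) = Cardinal.mk (∀ j, G j) ∧ WDivisible (G i) := by
  refine ⟨fun hw => ?_, fun ⟨_, hcard, hwi⟩ => hwi.pi_of_mk_eq hcard⟩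
  rcases finite_or_infinite (∀ i, G i) with hfin | hinf
  · have := hw.subsingleton_of_finite
    let i₀ : Fin n := ⟨0, hn⟩
    have : Subsingleton (G i₀) := (Pi.single_injective (M := G) i₀).subsingleton
    exact ⟨i₀, mk_congr (equivOfSubsingletonOfSubsingleton 0 0), .of_subsingleton⟩
  · exact hw.exists_component_of_aleph0_le (aleph0_le_mk _)
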